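/- arXiv:2008.13727 — 2 statements merged into one kernel-verified Lean document; each statement's English description precedes it below -/
import Mathlib

section
/- If X is a subshift of finite type, then the Gibbs relation equals the topological Gibbs relation: 𝔗 = 𝔗⁰, i.e. for every pair x, y ∈ X agreeing outside a finite set there exists φ ∈ 𝓕(X) with y = φ(x). -/
open MeasureTheory Filter Topology

/-- The full shift configuration space `𝒜^{ℤ^d}`. -/
abbrev Config (d : ℕ) (A : Type*) := (Fin d → ℤ) → A

/-- The shift action of `ℤ^d`: `(T^k x)_i = x_{i+k}`. -/
def shift {d : ℕ} {A : Type*} (k : Fin d → ℤ) (x : Config d A) : Config d A :=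
  fun i => x (i + k)

/-- The ℓ∞ norm of a lattice point, `‖k‖_∞ = max_i |k_i|`. -/
def normInf {d : ℕ} (k : Fin d → ℤ) : ℕ :=
  Finset.univ.sup fun i => (k i).natAbs

/-- The box `Λ_N = {k : ‖k‖_∞ ≤ N}` as a finset. -/
noncomputable def boxF (d N : ℕ) : Finset (Fin d → ℤ) :=
  Finset.Icc (fun _ => -(N : ℤ)) (fun _ => (N : ℤ))

/-- The `n`-th variation of `f` on a subshift `X`:
`δ_n(f) = sup {|f x - f y| : x, y ∈ X, x_{Λ_n} = y_{Λ_n}}`. -/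
noncomputable def deltaVar {d : ℕ} {A : Type*} (X : Set (Config d A))
    (f : Config d A → ℝ) (n : ℕ) : ℝ :=
  sSup {r : ℝ | ∃ x ∈ X, ∃ y ∈ X,
    (∀ k : Fin d → ℤ, normInf k ≤ n → x k = y k) ∧ r = |f x - f y|}

/-- `f` is bounded on `X`. -/
def BoundedOn {d : ℕ} {A : Type*} (X : Set (Config d A)) (f : Config d A → ℝ) : Prop :=
  ∃ C : ℝ, ∀ x ∈ X, |f x| ≤ C

/-- Membership in `SV_d(X)`: bounded with `Σ_{n ≥ 1} n^{d-1} δ_n(f) < ∞`. -/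
def MemSV (d : ℕ) {A : Type*} (X : Set (Config d A)) (f : Config d A → ℝ) : Prop :=
  BoundedOn X f ∧ Summable fun n : ℕ => ((n : ℝ) + 1) ^ (d - 1) * deltaVar X f (n + 1)

/-- The sup norm of `f` over `X`. -/
noncomputable def supNormOn {d : ℕ} {A : Type*} (X : Set (Config d A))
    (f : Config d A → ℝ) : ℝ :=
  sSup {r : ℝ | ∃ x ∈ X, r = |f x|}

/-- The `SV_d` norm: `‖f‖_{SV_d} = ‖f‖_∞ + Σ_{n ≥ 1} n^{d-1} δ_n(f)`. -/
noncomputable def svNorm (d : ℕ) {A : Type*} (X : Set (Config d A))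
    (f : Config d A → ℝ) : ℝ :=
  supNormOn X f + ∑' n : ℕ, ((n : ℝ) + 1) ^ (d - 1) * deltaVar X f (n + 1)

/-- The Gibbs relation `𝔗`: pairs of points of `X` that agree outside a finite set. -/
def gibbsRel {d : ℕ} {A : Type*} (X : Set (Config d A)) :
    Set (Config d A × Config d A) :=
  {p | p.1 ∈ X ∧ p.2 ∈ X ∧ ∃ Λ : Finset (Fin d → ℤ), ∀ k ∉ Λ, p.1 k = p.2 k}

/-- The cocycle `φ_f(x,y) = Σ_{k ∈ ℤ^d} (f(T^k y) - f(T^k x))` (unordered sum). -/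
noncomputable def phiF {d : ℕ} {A : Type*} (f : Config d A → ℝ)
    (x y : Config d A) : ℝ :=
  ∑' k : Fin d → ℤ, (f (shift k y) - f (shift k x))

/-- Membership in `𝓕(X)`: homeomorphisms of `X` changing only finitely many coordinates,
uniformly. -/
def memF {d : ℕ} {A : Type*} [TopologicalSpace A] (X : Set (Config d A))
    (φ : ↥X ≃ₜ ↥X) : Prop :=
  ∃ n : ℕ, 1 ≤ n ∧ ∀ x : ↥X, ∀ k : Fin d → ℤ, n < normInf k → (φ x).1 k = x.1 k

/-- `𝓕_n(X)`. -/
def Fn {d : ℕ} {A : Type*} [TopologicalSpace A] (X : Set (Config d A)) (n : ℕ) :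
    Set (↥X ≃ₜ ↥X) :=
  {φ | (∀ x : ↥X, ∀ k : Fin d → ℤ, n < normInf k → (φ x).1 k = x.1 k) ∧
    ∀ x y : ↥X,
      ((∀ k : Fin d → ℤ, normInf k ≤ n → x.1 k = y.1 k) ↔
        (∀ k : Fin d → ℤ, normInf k ≤ n → (φ x).1 k = (φ y).1 k))}

/-- The configuration `ω x_{Λ^c}`: equal to `ω` on `Λ` and to `x` off `Λ`. -/
def patch {d : ℕ} {A : Type*} (Λ : Finset (Fin d → ℤ)) (ω : {k // k ∈ Λ} → A)
    (x : Config d A) : Config d A :=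
  fun k => if h : k ∈ Λ then ω ⟨k, h⟩ else x k

/-- `f_n = Σ_{i ∈ Λ_n} f ∘ T^i`. -/
noncomputable def fnSum (d : ℕ) {A : Type*} (f : Config d A → ℝ) (n : ℕ)
    (z : Config d A) : ℝ :=
  ∑ i ∈ boxF d n, f (shift i z)

/-- The σ-algebra `𝓕_Δ` on `X`, generated by the coordinate projections `x ↦ x_i`, `i ∈ Δ`. -/
def cylSigma {d : ℕ} {A : Type*} [MeasurableSpace A] (X : Set (Config d A))
    (Δ : Set (Fin d → ℤ)) : MeasurableSpace ↥X :=
  MeasurableSpace.comap (fun (x : ↥X) (i : ↥Δ) => x.1 i.1) MeasurableSpace.pi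

/-- `μ` is a Gibbs measure for `f`: `(φ_f, 𝔗)`-conformal. -/
def IsGibbs (d : ℕ) {A : Type*} [MeasurableSpace A] (X : Set (Config d A))
    (f : Config d A → ℝ) (μ : Measure ↥X) : Prop :=
  ∀ V W : ↥X → ↥X, Measurable V → Measurable W →
    (∀ x, W (V x) = x) → (∀ x, V (W x) = x) →
    (∀ x : ↥X, ((x.1, (V x).1) ∈ gibbsRel X)) →
    (Measure.map V μ ≪ μ ∧
      ∀ᵐ x ∂μ, (Measure.map V μ).rnDeriv μ x
        = ENNReal.ofReal (Real.exp (phiF f x.1 (W x).1)))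

/-- `μ` is a topological Gibbs measure for `f`: `(φ_f|_{𝔗⁰}, 𝔗⁰)`-conformal. -/
def IsTopGibbs (d : ℕ) {A : Type*} [TopologicalSpace A] [MeasurableSpace A]
    (X : Set (Config d A)) (f : Config d A → ℝ) (μ : Measure ↥X) : Prop :=
  ∀ φ : ↥X ≃ₜ ↥X, memF X φ →
    (Measure.map (⇑φ) μ ≪ μ ∧
      ∀ᵐ x ∂μ, (Measure.map (⇑φ) μ).rnDeriv μ x
        = ENNReal.ofReal (Real.exp (phiF f x.1 (φ.symm x).1)))

/-- Finite-volume Gibbsian ratios defining the kernel `γ_Λ`. -/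
noncomputable def gammaFn (d : ℕ) {A : Type*} [Fintype A] (X : Set (Config d A))
    (f : Config d A → ℝ) (Λ : Finset (Fin d → ℤ)) (S : Set ↥X) (x : Config d A)
    (n : ℕ) : ℝ :=
  (∑ ω : {k // k ∈ Λ} → A,
      (Subtype.val '' S).indicator (fun z => Real.exp (fnSum d f n z)) (patch Λ ω x)) /
  (∑ η : {k // k ∈ Λ} → A,
      X.indicator (fun z => Real.exp (fnSum d f n z)) (patch Λ η x))

/-- The kernel `γ_Λ(S | x)`, defined as the limit of the finite-volume ratios. -/
noncomputable def gamma (d : ℕ) {A : Type*} [Fintype A] (X : Set (Config d A))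
    (f : Config d A → ℝ) (Λ : Finset (Fin d → ℤ)) (S : Set ↥X) (x : Config d A) : ℝ :=
  limUnder atTop (gammaFn d X f Λ S x)

/-- `X` is a subshift of finite type. -/
def IsSFT {d : ℕ} {A : Type*} (X : Set (Config d A)) : Prop :=
  ∃ n : ℕ, 1 ≤ n ∧ ∃ F : Set ({k : Fin d → ℤ // normInf k ≤ n} → A),
    X = {x : Config d A |
      ∀ l : Fin d → ℤ, (fun k : {k : Fin d → ℤ // normInf k ≤ n} => shift l x k.1) ∉ F}

/-- The topological Gibbs relation `𝔗⁰`. -/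
def topGibbsRel {d : ℕ} {A : Type*} [TopologicalSpace A] (X : Set (Config d A)) :
    Set (Config d A × Config d A) :=
  {p | ∃ (hx : p.1 ∈ X) (φ : ↥X ≃ₜ ↥X), memF X φ ∧ (φ ⟨p.1, hx⟩).1 = p.2}

/-- `f` is a local function on `X`. -/
def IsLocal {d : ℕ} {A : Type*} (X : Set (Config d A)) (f : Config d A → ℝ) : Prop :=
  ∃ Λ : Finset (Fin d → ℤ), ∀ x ∈ X, ∀ y ∈ X, (∀ k ∈ Λ, x k = y k) → f x = f y

/-!
Given `x, y ∈ X` that agree outside the box `Λ_M`, let `m = M + 2n`, where `n` is the radius of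
the forbidden patterns. The map that replaces `x|Λ_m` by `y|Λ_m` in every configuration
looking like `x` on `Λ_m`, does the reverse for those looking like `y`, and fixes all others
is a continuous involution of the full shift moving only coordinates in `Λ_m`. It preserves
`X` because every window of radius `n` of the new configuration is either a window of `x`
or `y` (near the origin) or of the old configuration (away from `Λ_M`).
-/

section

variable {d : ℕ} {A : Type*}

lemma mem_boxF_iff {N : ℕ} {k : Fin d → ℤ} : k ∈ boxF d N ↔ normInf k ≤ N := by
  simp only [boxF, Finset.mem_Icc, Pi.le_def, normInf, Finset.sup_le_iff, Finset.mem_univ,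
    true_implies, ← forall_and]
  exact forall_congr' fun i => by omega

lemma normInf_add_le (a b : Fin d → ℤ) : normInf (a + b) ≤ normInf a + normInf b :=
  Finset.sup_le fun i _ => (Int.natAbs_add_le _ _).trans <|
    add_le_add (Finset.le_sup (f := fun i => (a i).natAbs) (Finset.mem_univ i))
      (Finset.le_sup (f := fun i => (b i).natAbs) (Finset.mem_univ i))

lemma normInf_neg (a : Fin d → ℤ) : normInf (-a) = normInf a := by
  simp [normInf]

section swap

variable {ι : Type*}

lemma isClopen_setOf_eqOn [TopologicalSpace A] [DiscreteTopology A] (s : Finset ι) (x : ι → A) :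
    IsClopen {z : ι → A | Set.EqOn z x s} := by
  simp only [Set.EqOn, Finset.mem_coe, Set.ofPred_forall]
  exact isClopen_biInter_finset fun k _ => (isClopen_discrete {x k}).preimage (continuous_apply k)

variable [DecidableEq ι]

open Classical in
noncomputable def swapOn (s : Finset ι) (x y z : ι → A) : ι → A :=
  if Set.EqOn z x s then s.piecewise y z
  else if Set.EqOn z y s then s.piecewise x z
  else z

lemma swapOn_apply_of_notMem {s : Finset ι} {x y z : ι → A} {k : ι} (hk : k ∉ s) :
    swapOn s x y z k = z k := by
  unfold swapOn
  split_ifs <;> simp [hk]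

lemma swapOn_self {s : Finset ι} {x y : ι → A} (h : ∀ k ∉ s, x k = y k) :
    swapOn s x y x = y := by
  ext k
  by_cases hk : k ∈ s <;> simp [swapOn, Set.EqOn, hk, h]

lemma Finset.piecewise_eq_right_of_eqOn {s : Finset ι} {f g : ι → A} (h : Set.EqOn g f s) :
    s.piecewise f g = g :=
  (s.piecewise_congr (fun _ hi => (h hi).symm) fun _ _ => rfl).trans (s.piecewise_same g)

lemma swapOn_involutive (s : Finset ι) (x y : ι → A) : Function.Involutive (swapOn s x y) := by
  intro z
  have hy : Set.EqOn (s.piecewise y z) y s := fun k hk => s.piecewise_eq_of_mem _ _ hk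
  have hx : Set.EqOn (s.piecewise x z) x s := fun k hk => s.piecewise_eq_of_mem _ _ hk
  by_cases hzx : Set.EqOn z x s
  · by_cases hyx : Set.EqOn (s.piecewise y z) x s
    · have hzy : Set.EqOn z y s := hzx.trans (hyx.symm.trans hy)
      simp [swapOn, hzx, s.piecewise_eq_right_of_eqOn hzy]
    · simp [swapOn, hzx, hyx, hy, s.piecewise_eq_right_of_eqOn hzx]
  · by_cases hzy : Set.EqOn z y s
    · simp [swapOn, hzx, hzy, hx, s.piecewise_eq_right_of_eqOn hzy]
    · simp [swapOn, hzx, hzy]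

lemma continuous_piecewise_const [TopologicalSpace A] (s : Finset ι) (x : ι → A) :
    Continuous fun z : ι → A => s.piecewise x z :=
  continuous_pi fun k => by
    by_cases hk : k ∈ s
    · simpa [hk] using continuous_const
    · simpa [hk] using continuous_apply k

lemma continuous_swapOn [TopologicalSpace A] [DiscreteTopology A] (s : Finset ι) (x y : ι → A) :
    Continuous (swapOn s x y) := by
  classical
  refine (continuous_piecewise_const s y).if (fun z hz => ?_) <|
    (continuous_piecewise_const s x).if (fun z hz => ?_) continuous_id
  · simp [(isClopen_setOf_eqOn s x).frontier_eq] at hz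
  · simp [(isClopen_setOf_eqOn s y).frontier_eq] at hz

end swap

def Set.MapsTo.involutiveHomeomorph [TopologicalSpace A] {X : Set A} {f : A → A}
    (hX : Set.MapsTo f X X) (hf : Function.Involutive f) (hcont : Continuous f) : X ≃ₜ X where
  toFun := hX.restrict f X X
  invFun := hX.restrict f X X
  left_inv z := Subtype.ext (hf z)
  right_inv z := Subtype.ext (hf z)
  continuous_toFun := hcont.restrict hX
  continuous_invFun := hcont.restrict hX

lemma topGibbsRel_subset_gibbsRel [TopologicalSpace A] (X : Set (Config d A)) :
    topGibbsRel X ⊆ gibbsRel X := by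
  rintro p ⟨hx, φ, ⟨N, -, hφ⟩, hφx⟩
  refine ⟨hx, hφx ▸ (φ ⟨p.1, hx⟩).2, boxF d N, fun k hk => ?_⟩
  rw [← hφx, hφ _ k]
  simpa [mem_boxF_iff] using hk

section SFT

variable {X : Set (Config d A)} {n : ℕ} {F : Set ({k : Fin d → ℤ // normInf k ≤ n} → A)}

lemma mem_of_eq_on_box_of_eq_off_box
    (hX : X = {x | ∀ l, (fun k : {k : Fin d → ℤ // normInf k ≤ n} => shift l x k.1) ∉ F})
    {M : ℕ} {u z w : Config d A} (hu : u ∈ X) (hz : z ∈ X)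
    (hwu : ∀ j, normInf j ≤ M + 2 * n → w j = u j) (hwz : ∀ j, M < normInf j → w j = z j) :
    w ∈ X := by
  subst hX
  intro l
  by_cases hl : normInf l ≤ M + n
  · convert hu l using 2
    funext k
    refine hwu _ ?_
    have := normInf_add_le k.1 l
    have := k.2
    omega
  · convert hz l using 2
    funext k
    refine hwz _ ?_
    have h := normInf_add_le (k.1 + l) (-k.1)
    rw [add_neg_cancel_comm, normInf_neg] at h
    have := k.2
    omega

lemma piecewise_boxF_mem
    (hX : X = {x | ∀ l, (fun k : {k : Fin d → ℤ // normInf k ≤ n} => shift l x k.1) ∉ F})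
    {M : ℕ} {u v z : Config d A} (hu : u ∈ X) (hz : z ∈ X)
    (huv : ∀ k, M < normInf k → u k = v k) (hzv : Set.EqOn z v (boxF d (M + 2 * n))) :
    (boxF d (M + 2 * n)).piecewise u z ∈ X := by
  refine mem_of_eq_on_box_of_eq_off_box hX hu hz
    (fun j hj => Finset.piecewise_eq_of_mem _ _ _ (mem_boxF_iff.2 hj)) fun j hj => ?_
  by_cases hjm : j ∈ boxF d (M + 2 * n)
  · rw [Finset.piecewise_eq_of_mem _ _ _ hjm, huv j hj, hzv hjm]
  · exact Finset.piecewise_eq_of_notMem _ _ _ hjm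

lemma mapsTo_swapOn_boxF
    (hX : X = {x | ∀ l, (fun k : {k : Fin d → ℤ // normInf k ≤ n} => shift l x k.1) ∉ F})
    {M : ℕ} {x y : Config d A} (hx : x ∈ X) (hy : y ∈ X) (hxy : ∀ k, M < normInf k → x k = y k) :
    Set.MapsTo (swapOn (boxF d (M + 2 * n)) x y) X X := by
  intro z hz
  unfold swapOn
  split_ifs with hzx hzy
  · exact piecewise_boxF_mem hX hy hz (fun k hk => (hxy k hk).symm) hzx
  · exact piecewise_boxF_mem hX hx hz hxy hzy
  · exact hz

end SFT

lemma gibbsRel_subset_topGibbsRel_of_isSFT [TopologicalSpace A] [DiscreteTopology A]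
    {X : Set (Config d A)} (hX : IsSFT X) : gibbsRel X ⊆ topGibbsRel X := by
  obtain ⟨n, -, F, hX⟩ := hX
  rintro ⟨x, y⟩ ⟨hx, hy, Λ, hΛ⟩
  set M := Λ.sup normInf
  have hxy : ∀ k, M < normInf k → x k = y k := fun k hk =>
    hΛ k fun hkΛ => hk.not_ge (Finset.le_sup hkΛ)
  set s := boxF d (M + 2 * n)
  refine ⟨hx, (mapsTo_swapOn_boxF hX hx hy hxy).involutiveHomeomorph (swapOn_involutive s x y)
    (continuous_swapOn s x y), ⟨M + 2 * n + 1, by omega, fun z k hk => ?_⟩, ?_⟩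
  · exact swapOn_apply_of_notMem (by simp only [mem_boxF_iff]; omega)
  · refine swapOn_self fun k hk => hxy k ?_
    simp only [mem_boxF_iff] at hk
    omega

end

theorem gibbsRel_eq_topGibbsRel_of_SFT_general {d : ℕ} {A : Type*}
    [TopologicalSpace A] [DiscreteTopology A]
    (X : Set (Config d A)) (hSFT : IsSFT X) :
    gibbsRel X = topGibbsRel X :=
  (gibbsRel_subset_topGibbsRel_of_isSFT hSFT).antisymm (topGibbsRel_subset_gibbsRel X)

/-- If `X` is a subshift of finite type, then the Gibbs relation equals
the topological Gibbs relation: `𝔗 = 𝔗⁰`. -/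
theorem gibbsRel_eq_topGibbsRel_of_SFT {d : ℕ} (hd : 1 ≤ d) {A : Type*} [Fintype A]
    [Nonempty A] [TopologicalSpace A] [DiscreteTopology A]
    (X : Set (Config d A)) (hne : X.Nonempty) (hSFT : IsSFT X) :
    gibbsRel X = topGibbsRel X :=
  gibbsRel_eq_topGibbsRel_of_SFT_general X hSFT
end

section
/- Let f ∈ SV_d(X) and φ ∈ 𝓕(X). Then the function F : X → ℝ defined by F(x) = φ_f(x, φ(x)) is continuous; indeed, the partial sums F_N(x) = Σ_{k∈Λ_N} (f(T^k φ(x)) − f(T^k x)) converge to F uniformly on X. -/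
open MeasureTheory Filter Topology

/-! Since `φ` moves only coordinates in `Λ_n`, the configurations `T^k φ(x)` and `T^k x` agree
on `Λ_{‖k‖-n-1}`, so the `k`-th term of the series is bounded by `δ_{‖k‖-n-1}(f)` uniformly
in `x`. The sphere `‖k‖_∞ = m` has at most `2d(2m+1)^{d-1}` points, so `Σ n^{d-1} δ_n(f) < ∞`
makes these bounds summable over `ℤ^d`, and the Weierstrass M-test gives uniform
convergence. The partial sums are continuous because `δ_n(f) → 0` makes `f` continuous on `X`. -/

open Finset

section Lattice

variable {d : ℕ}

lemma normInf_le_iff {k : Fin d → ℤ} {N : ℕ} : normInf k ≤ N ↔ ∀ j, (k j).natAbs ≤ N := by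
  simp [normInf, Finset.sup_le_iff]

lemma natAbs_le_normInf (k : Fin d → ℤ) (j : Fin d) : (k j).natAbs ≤ normInf k :=
  normInf_le_iff.1 le_rfl j

lemma normInf_sub_le (a b : Fin d → ℤ) : normInf (a - b) ≤ normInf a + normInf b :=
  normInf_le_iff.2 fun j =>
    (Int.natAbs_sub_le _ _).trans (add_le_add (natAbs_le_normInf a j) (natAbs_le_normInf b j))

lemma mem_boxF {k : Fin d → ℤ} {N : ℕ} : k ∈ boxF d N ↔ normInf k ≤ N := by
  simp only [boxF, mem_Icc, Pi.le_def, normInf_le_iff, ← forall_and]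
  exact forall_congr' fun j => by omega

lemma card_boxF (N : ℕ) : #(boxF d N) = (2 * N + 1) ^ d := by
  simp only [boxF, Pi.card_Icc, Int.card_Icc, prod_const, card_univ, Fintype.card_fin]
  congr 1
  omega

lemma boxF_mono : Monotone (boxF d) := fun _ _ h _ hk =>
  mem_boxF.2 ((mem_boxF.1 hk).trans h)

lemma tendsto_boxF_atTop : Tendsto (boxF d) atTop atTop :=
  tendsto_atTop_finset_of_monotone boxF_mono fun k => ⟨normInf k, mem_boxF.2 le_rfl⟩

lemma card_le_of_normInf_eq (hd : 1 ≤ d) {m : ℕ} {t : Finset (Fin d → ℤ)}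
    (ht : ∀ k ∈ t, normInf k = m) : #t ≤ 2 * d * (2 * m + 1) ^ (d - 1) := by
  cases m with
  | zero =>
    have : #t ≤ 1 := by
      simpa [card_boxF] using card_le_card fun k hk => mem_boxF.2 (ht k hk).le
    exact this.trans (by simp only [mul_zero, zero_add, one_pow, mul_one]; omega)
  | succ m =>
    have hsub : t ⊆ boxF d (m + 1) \ boxF d m := fun k hk => by
      simp [mem_boxF, ht k hk]
    calc #t ≤ (2 * (m + 1) + 1) ^ d - (2 * m + 1) ^ d := by
          simpa [card_sdiff_of_subset (boxF_mono m.le_succ), card_boxF] using card_le_card hsub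
      _ ≤ 2 * d * (2 * (m + 1) + 1) ^ (d - 1) := by
          have := abs_pow_sub_pow_le (α := ℤ) (2 * m + 3) (2 * m + 1) d
          zify [Nat.pow_le_pow_left (by omega : 2 * m + 1 ≤ 2 * (m + 1) + 1) d]
          grind

end Lattice

lemma summable_comp_normInf {d : ℕ} (hd : 1 ≤ d) {g : ℕ → ℝ} (hg0 : ∀ m, 0 ≤ g m)
    (hg : Summable fun m : ℕ => (2 * (m : ℝ) + 1) ^ (d - 1) * g m) :
    Summable fun k : Fin d → ℤ => g (normInf k) := by
  classical
  refine summable_of_sum_le (c := 2 * d * ∑' m : ℕ, (2 * (m : ℝ) + 1) ^ (d - 1) * g m)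
    (fun k => hg0 _) fun s => ?_
  calc ∑ k ∈ s, g (normInf k)
      = ∑ m ∈ s.image normInf, #{k ∈ s | normInf k = m} • g m := sum_comp g normInf
    _ ≤ ∑ m ∈ s.image normInf, 2 * d * ((2 * (m : ℝ) + 1) ^ (d - 1) * g m) := by
        refine sum_le_sum fun m _ => ?_
        rw [nsmul_eq_mul, ← mul_assoc]
        gcongr
        · exact hg0 m
        · exact_mod_cast card_le_of_normInf_eq hd fun k hk => (mem_filter.1 hk).2
    _ ≤ 2 * d * ∑' m : ℕ, (2 * (m : ℝ) + 1) ^ (d - 1) * g m := by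
        rw [← mul_sum]
        gcongr
        exact hg.sum_le_tsum _ fun m _ => mul_nonneg (by positivity) (hg0 m)

lemma summable_two_mul_add_one_pow_mul_sub {a : ℕ → ℝ} (ha : ∀ j, 0 ≤ a j) {p : ℕ}
    (h : Summable fun j : ℕ => ((j : ℝ) + 1) ^ p * a (j + 1)) (c : ℕ) :
    Summable fun m : ℕ => (2 * (m : ℝ) + 1) ^ p * a (m - c) := by
  rw [← summable_nat_add_iff (c + 1)]
  refine .of_nonneg_of_le (fun m => mul_nonneg (by positivity) (ha _)) (fun m => ?_)
    (h.mul_left ((2 * (c : ℝ) + 3) ^ p))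
  rw [show m + (c + 1) - c = m + 1 by omega, ← mul_assoc, ← mul_pow]
  gcongr
  · exact ha _
  · push_cast; nlinarith

section Variation

variable {d : ℕ} {A : Type*} {X : Set (Config d A)} {f : Config d A → ℝ}

lemma deltaVar_nonneg (m : ℕ) : 0 ≤ deltaVar X f m :=
  Real.sSup_nonneg <| by
    rintro r ⟨x, -, y, -, -, rfl⟩
    exact abs_nonneg _

lemma abs_sub_le_deltaVar (hf : BoundedOn X f) {m : ℕ} {x y : Config d A} (hx : x ∈ X)
    (hy : y ∈ X) (hxy : ∀ k : Fin d → ℤ, normInf k ≤ m → x k = y k) :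
    |f x - f y| ≤ deltaVar X f m := by
  obtain ⟨C, hC⟩ := hf
  refine le_csSup ⟨2 * C, ?_⟩ ⟨x, hx, y, hy, hxy, rfl⟩
  rintro r ⟨x, hx, y, hy, -, rfl⟩
  linarith [abs_sub _ _ |>.trans (add_le_add (hC x hx) (hC y hy))]

lemma MemSV.tendsto_deltaVar (hf : MemSV d X f) :
    Tendsto (fun m => deltaVar X f (m + 1)) atTop (𝓝 0) :=
  squeeze_zero (fun _ => deltaVar_nonneg _)
    (fun m => le_mul_of_one_le_left (deltaVar_nonneg _) (one_le_pow₀ (by simp)))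
    hf.2.tendsto_atTop_zero

lemma MemSV.continuous_restrict [TopologicalSpace A] [DiscreteTopology A] (hf : MemSV d X f) :
    Continuous fun x : X => f x := by
  refine continuous_iff_continuousAt.2 fun y => Metric.tendsto_nhds.2 fun ε hε => ?_
  obtain ⟨m, hm⟩ := (hf.tendsto_deltaVar.eventually_lt_const hε).exists
  have hcyl : IsOpen {z : X | z.1 ∈ (boxF d (m + 1) : Set (Fin d → ℤ)).pi fun i => {y.1 i}} :=
    (isOpen_set_pi (boxF d (m + 1)).finite_toSet fun _ _ => isOpen_discrete _).preimage
      continuous_subtype_val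
  filter_upwards [hcyl.mem_nhds fun i _ => rfl] with z hz
  rw [Real.dist_eq]
  exact (abs_sub_le_deltaVar hf.1 z.2 y.2 fun k hk => hz k (mem_boxF.2 hk)).trans_lt hm

lemma abs_sub_comp_shift_le (hf : BoundedOn X f)
    (hinv : ∀ k : Fin d → ℤ, ∀ x ∈ X, shift k x ∈ X) {x y : Config d A} (hx : x ∈ X)
    (hy : y ∈ X) {n : ℕ} (hxy : ∀ i : Fin d → ℤ, n < normInf i → x i = y i)
    {k : Fin d → ℤ} (hk : n < normInf k) :
    |f (shift k y) - f (shift k x)| ≤ deltaVar X f (normInf k - (n + 1)) := by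
  refine abs_sub_le_deltaVar hf (hinv k y hy) (hinv k x hx) fun i hi => (hxy (i + k) ?_).symm
  have := normInf_sub_le (i + k) i
  rw [add_sub_cancel_left] at this
  omega

lemma continuous_comp_shift [TopologicalSpace A] (hf : Continuous fun x : X => f x)
    (hinv : ∀ k : Fin d → ℤ, ∀ x ∈ X, shift k x ∈ X) (k : Fin d → ℤ) :
    Continuous fun x : X => f (shift k x.1) := by
  have hshift : Continuous fun x : X => (⟨shift k x.1, hinv k x x.2⟩ : X) :=
    ((continuous_pi fun i => continuous_apply (i + k)).comp continuous_subtype_val).subtype_mk _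
  exact hf.comp hshift

end Variation

theorem phiF_continuous_general {d : ℕ} (hd : 1 ≤ d) {A : Type*}
    [TopologicalSpace A] [DiscreteTopology A]
    (X : Set (Config d A))
    (hinv : ∀ k : Fin d → ℤ, ∀ x ∈ X, shift k x ∈ X)
    (f : Config d A → ℝ) (hf : MemSV d X f)
    (φ : ↥X ≃ₜ ↥X) (hφ : memF X φ) :
    TendstoUniformly
      (fun (N : ℕ) (x : ↥X) => ∑ k ∈ boxF d N, (f (shift k (φ x).1) - f (shift k x.1)))
      (fun x : ↥X => phiF f x.1 (φ x).1) atTop ∧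
    Continuous (fun x : ↥X => phiF f x.1 (φ x).1) := by
  obtain ⟨n, -, hφn⟩ := hφ
  have hsum : Summable fun k => deltaVar X f (normInf k - (n + 1)) :=
    summable_comp_normInf hd (g := fun m => deltaVar X f (m - (n + 1)))
      (fun _ => deltaVar_nonneg _) <| summable_two_mul_add_one_pow_mul_sub
        (a := deltaVar X f) (fun _ => deltaVar_nonneg _) hf.2 (n + 1)
  have hbound : ∀ᶠ k in cofinite, ∀ x : X,
      ‖f (shift k (φ x).1) - f (shift k x.1)‖ ≤ deltaVar X f (normInf k - (n + 1)) := by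
    refine eventually_cofinite.2 <| (boxF d n).finite_toSet.subset fun k hk => mem_boxF.2 ?_
    refine not_lt.1 fun hnk => hk fun x => ?_
    rw [Real.norm_eq_abs]
    exact abs_sub_comp_shift_le hf.1 hinv x.2 (φ x).2 (fun i hi => (hφn x i hi).symm) hnk
  have hunif : TendstoUniformly
      (fun (N : ℕ) (x : ↥X) => ∑ k ∈ boxF d N, (f (shift k (φ x).1) - f (shift k x.1)))
      (fun x : ↥X => phiF f x.1 (φ x).1) atTop := fun v hv =>
    tendsto_boxF_atTop.eventually (tendstoUniformly_tsum_of_cofinite_eventually hsum hbound v hv)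
  have hfc := hf.continuous_restrict
  refine ⟨hunif, hunif.continuous (.of_forall fun N => continuous_finsetSum _ fun k _ => ?_)⟩
  exact ((continuous_comp_shift hfc hinv k).comp φ.continuous).sub
    (continuous_comp_shift hfc hinv k)

/-- For `f ∈ SV_d(X)` and `φ ∈ 𝓕(X)`, the partial sums
`F_N(x) = Σ_{k ∈ Λ_N} (f(T^k φ(x)) − f(T^k x))` converge uniformly to
`F(x) = φ_f(x, φ(x))`; in particular `F` is continuous. -/
theorem phiF_continuous {d : ℕ} (hd : 1 ≤ d) {A : Type*} [Fintype A] [Nonempty A]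
    [TopologicalSpace A] [DiscreteTopology A]
    (X : Set (Config d A)) (hne : X.Nonempty) (hcl : IsClosed X)
    (hinv : ∀ k : Fin d → ℤ, ∀ x ∈ X, shift k x ∈ X)
    (f : Config d A → ℝ) (hf : MemSV d X f)
    (φ : ↥X ≃ₜ ↥X) (hφ : memF X φ) :
    TendstoUniformly
      (fun (N : ℕ) (x : ↥X) => ∑ k ∈ boxF d N, (f (shift k (φ x).1) - f (shift k x.1)))
      (fun x : ↥X => phiF f x.1 (φ x).1) atTop ∧
    Continuous (fun x : ↥X => phiF f x.1 (φ x).1) :=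
  phiF_continuous_general hd X hinv f hf φ hφ
end
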